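/- Let n ≥ 0 be an integer. The minimum of ME_{n,δ} over δ ∈ (0, n+1) equals (1/e)(e - Σ_{k=0}^n 1/k!) and is attained at δ = (n!(e - Σ_{k=0}^n 1/k!))^{-1}, at which point s_n(δ) = 1. -/

import Mathlib

open Real Finset

/-- Degree-n Taylor polynomial of `exp` at 0. -/
noncomputable def T (n : ℕ) (s : ℝ) : ℝ := ∑ k ∈ Finset.range (n + 1), s ^ k / (Nat.factorial k)

/-- The function `E_{n,δ}`. -/
noncomputable def E (n : ℕ) (δ : ℝ) (s : ℝ) : ℝ := (1 - T n s * Real.exp (-s)) / s ^ δ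

/-- `ME_{n,δ}`: the maximum of `E_{n,δ}` over `s ≥ 0`. -/
noncomputable def ME (n : ℕ) (δ : ℝ) : ℝ := sSup (E n δ '' Set.Ici 0)

noncomputable def f (n : ℕ) (s : ℝ) : ℝ := 1 - T n s * Real.exp (-s)

lemma T_zero (n : ℕ) : T n 0 = 1 := by
  unfold T
  rw [Finset.sum_range_succ']
  simp

lemma hasDerivAt_T (n : ℕ) (s : ℝ) :
    HasDerivAt (T n) (T n s - s ^ n / (Nat.factorial n)) s := by
  induction n with
  | zero =>
    have hT : (T 0) = fun _ : ℝ => (1:ℝ) := by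
      funext x; unfold T; simp
    rw [hT]
    simpa using (hasDerivAt_const s (1:ℝ))
  | succ m ih =>
    have h1 : HasDerivAt (fun x : ℝ => x ^ (m+1) / (Nat.factorial (m+1)))
        (((m:ℝ)+1) * s ^ m / (Nat.factorial (m+1))) s := by
      simpa using ((hasDerivAt_pow (m+1) s).div_const (Nat.factorial (m+1) : ℝ))
    have hT : (T (m+1)) = fun x => T m x + x ^ (m+1) / (Nat.factorial (m+1)) := by
      funext x; unfold T; rw [Finset.sum_range_succ]
    have h2 := ih.add h1
    have heq : T m s - s ^ m / (Nat.factorial m) + ((m:ℝ)+1) * s ^ m / (Nat.factorial (m+1))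
        = T (m+1) s - s ^ (m+1) / (Nat.factorial (m+1)) := by
      rw [hT]; simp only [Nat.factorial_succ]
      push_cast
      have hm : (Nat.factorial m : ℝ) ≠ 0 := Nat.cast_ne_zero.2 (Nat.factorial_ne_zero m)
      field_simp
      ring
    rw [heq] at h2
    exact h2.congr_of_eventuallyEq (Filter.Eventually.of_forall (fun x => by simp [hT]))

lemma hasDerivAt_f (n : ℕ) (s : ℝ) :
    HasDerivAt (f n) (s ^ n * Real.exp (-s) / (Nat.factorial n)) s := by
  have h1 : HasDerivAt (fun x : ℝ => Real.exp (-x)) (-Real.exp (-s)) s := by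
    simpa [Function.comp_def] using (Real.hasDerivAt_exp (-s)).comp s (hasDerivAt_neg s)
  have h2 := ((hasDerivAt_T n s).mul h1).const_sub 1
  have heq : -((T n s - s ^ n / (Nat.factorial n)) * Real.exp (-s) + T n s * -Real.exp (-s))
      = s ^ n * Real.exp (-s) / (Nat.factorial n) := by ring
  rw [heq] at h2
  exact h2

lemma f_zero (n : ℕ) : f n 0 = 0 := by simp [f, T_zero]

lemma f_strictMono (n : ℕ) : StrictMonoOn (f n) (Set.Ici 0) := by
  apply strictMonoOn_of_deriv_pos (convex_Ici 0)
  · exact fun x _ => ((hasDerivAt_f n x).differentiableAt.continuousAt).continuousWithinAt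
  · intro x hx
    rw [interior_Ici] at hx
    rw [(hasDerivAt_f n x).deriv]
    have hx' : (0:ℝ) < x := hx
    exact div_pos (mul_pos (pow_pos hx' n) (Real.exp_pos _))
      (Nat.cast_pos.2 (Nat.factorial_pos n))

lemma f_pos (n : ℕ) {s : ℝ} (hs : 0 < s) : 0 < f n s := by
  have := f_strictMono n (Set.self_mem_Ici) (Set.mem_Ici.2 hs.le) hs
  rwa [f_zero] at this

lemma f_le_one (n : ℕ) {s : ℝ} (hs : 0 ≤ s) : f n s ≤ 1 := by
  unfold f
  have hT : 0 ≤ T n s := by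
    unfold T
    apply Finset.sum_nonneg
    intro k _
    positivity
  nlinarith [Real.exp_pos (-s)]

/-- auxiliary function G -/
noncomputable def G (n : ℕ) (s : ℝ) : ℝ :=
  s ^ (n+1) * Real.exp (-s) - (((n:ℝ)+1) - s) * ((Nat.factorial n) * f n s)

lemma hasDerivAt_G (n : ℕ) (s : ℝ) :
    HasDerivAt (G n) ((Nat.factorial n) * f n s) s := by
  have h1 : HasDerivAt (fun x : ℝ => Real.exp (-x)) (-Real.exp (-s)) s := by
    simpa [Function.comp_def] using (Real.hasDerivAt_exp (-s)).comp s (hasDerivAt_neg s)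
  have h2 : HasDerivAt (fun x : ℝ => x ^ (n+1)) (((n:ℝ)+1) * s ^ n) s := by
    simpa using hasDerivAt_pow (n+1) s
  have h3 := h2.mul h1
  have h4 : HasDerivAt (fun x : ℝ => (((n:ℝ)+1) - x)) (-1 : ℝ) s := by
    simpa using (hasDerivAt_id s).const_sub ((n:ℝ)+1)
  have h5 := ((hasDerivAt_f n s).const_mul ((Nat.factorial n : ℝ))).const_mul (((n:ℝ)+1) - s)
  have h6 : HasDerivAt (fun x : ℝ => (((n:ℝ)+1) - x) * ((Nat.factorial n : ℝ) * f n x))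
      ((-1) * ((Nat.factorial n : ℝ) * f n s)
        + (((n:ℝ)+1) - s) * ((Nat.factorial n : ℝ) * (s ^ n * Real.exp (-s) / (Nat.factorial n)))) s :=
    h4.mul ((hasDerivAt_f n s).const_mul ((Nat.factorial n : ℝ)))
  have h7 := h3.sub h6
  have heq : ((n:ℝ)+1) * s ^ n * Real.exp (-s) + s ^ (n+1) * -Real.exp (-s)
      - ((-1) * ((Nat.factorial n : ℝ) * f n s)
        + (((n:ℝ)+1) - s) * ((Nat.factorial n : ℝ) * (s ^ n * Real.exp (-s) / (Nat.factorial n))))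
      = (Nat.factorial n : ℝ) * f n s := by
    have hm : (Nat.factorial n : ℝ) ≠ 0 := Nat.cast_ne_zero.2 (Nat.factorial_ne_zero n)
    field_simp
    ring
  rw [heq] at h7
  exact h7

lemma G_zero (n : ℕ) : G n 0 = 0 := by simp [G, f_zero]

lemma G_pos (n : ℕ) {s : ℝ} (hs : 0 < s) : 0 < G n s := by
  have hmono : StrictMonoOn (G n) (Set.Ici 0) := by
    apply strictMonoOn_of_deriv_pos (convex_Ici 0)
    · exact fun x _ => ((hasDerivAt_G n x).differentiableAt.continuousAt).continuousWithinAt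
    · intro x hx
      rw [interior_Ici] at hx
      rw [(hasDerivAt_G n x).deriv]
      exact mul_pos (Nat.cast_pos.2 (Nat.factorial_pos n)) (f_pos n hx)
  have := hmono (Set.self_mem_Ici) (Set.mem_Ici.2 hs.le) hs
  rwa [G_zero] at this

/-- the function ψ -/
noncomputable def P (n : ℕ) (s : ℝ) : ℝ :=
  s ^ (n+1) * Real.exp (-s) / ((Nat.factorial n) * f n s)

lemma hasDerivAt_P (n : ℕ) {s : ℝ} (hs : 0 < s) :
    HasDerivAt (P n)
      ((s ^ n * Real.exp (-s) * (- G n s)) / ((Nat.factorial n : ℝ) * f n s) ^ 2) s := by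
  have hfs : ((Nat.factorial n : ℝ) * f n s) ≠ 0 :=
    (mul_pos (Nat.cast_pos.2 (Nat.factorial_pos n)) (f_pos n hs)).ne'
  have h1 : HasDerivAt (fun x : ℝ => Real.exp (-x)) (-Real.exp (-s)) s := by
    simpa [Function.comp_def] using (Real.hasDerivAt_exp (-s)).comp s (hasDerivAt_neg s)
  have h2 : HasDerivAt (fun x : ℝ => x ^ (n+1)) (((n:ℝ)+1) * s ^ n) s := by
    simpa using hasDerivAt_pow (n+1) s
  have h3 := h2.mul h1
  have h4 := (hasDerivAt_f n s).const_mul ((Nat.factorial n : ℝ))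
  have h5 := h3.div h4 hfs
  have heq : ((((n:ℝ)+1) * s ^ n * Real.exp (-s) + s ^ (n+1) * -Real.exp (-s))
        * ((Nat.factorial n : ℝ) * f n s)
      - s ^ (n+1) * Real.exp (-s) * ((Nat.factorial n : ℝ) * (s ^ n * Real.exp (-s) / (Nat.factorial n))))
      / ((Nat.factorial n : ℝ) * f n s) ^ 2
      = (s ^ n * Real.exp (-s) * (- G n s)) / ((Nat.factorial n : ℝ) * f n s) ^ 2 := by
    have hm : (Nat.factorial n : ℝ) ≠ 0 := Nat.cast_ne_zero.2 (Nat.factorial_ne_zero n)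
    unfold G
    field_simp
    ring
  rw [← heq]
  exact h5

lemma P_strictAnti (n : ℕ) : StrictAntiOn (P n) (Set.Ioi 0) := by
  apply strictAntiOn_of_deriv_neg (convex_Ioi 0)
  · intro x hx
    exact ((hasDerivAt_P n hx).differentiableAt.continuousAt).continuousWithinAt
  · intro x hx
    rw [interior_Ioi] at hx
    rw [(hasDerivAt_P n hx).deriv]
    apply div_neg_of_neg_of_pos
    · exact mul_neg_of_pos_of_neg (mul_pos (pow_pos hx n) (Real.exp_pos _))
        (neg_neg_of_pos (G_pos n hx))
    · have := mul_pos (Nat.cast_pos.2 (Nat.factorial_pos n)) (f_pos n hx)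
      positivity

noncomputable def D (n : ℕ) (δ : ℝ) (u : ℝ) : ℝ :=
  Real.log (f n 1) + δ * u - Real.log (f n (Real.exp u))

lemma hasDerivAt_D (n : ℕ) (δ : ℝ) (u : ℝ) :
    HasDerivAt (D n δ) (δ - P n (Real.exp u)) u := by
  have hfe : f n (Real.exp u) ≠ 0 := (f_pos n (Real.exp_pos u)).ne'
  have h1 : HasDerivAt (fun v : ℝ => f n (Real.exp v))
      ((Real.exp u) ^ n * Real.exp (-(Real.exp u)) / (Nat.factorial n) * Real.exp u) u :=
    (hasDerivAt_f n (Real.exp u)).comp u (Real.hasDerivAt_exp u)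
  have h2 := h1.log hfe
  have h3 : HasDerivAt (fun v : ℝ => Real.log (f n 1) + δ * v) δ u := by
    simpa using ((hasDerivAt_id u).const_mul δ).const_add (Real.log (f n 1))
  have h4 := h3.sub h2
  have heq : δ - (Real.exp u) ^ n * Real.exp (-(Real.exp u)) / (Nat.factorial n) * Real.exp u
        / f n (Real.exp u) = δ - P n (Real.exp u) := by
    have hm : (Nat.factorial n : ℝ) ≠ 0 := Nat.cast_ne_zero.2 (Nat.factorial_ne_zero n)
    unfold P
    rw [pow_succ]
    field_simp
  rw [heq] at h4
  exact h4

lemma D_zero (n : ℕ) (δ : ℝ) : D n δ 0 = 0 := by simp [D]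

lemma D_nonneg (n : ℕ) {δ : ℝ} (hδ : δ = P n 1) (u : ℝ) : 0 ≤ D n δ u := by
  rcases le_or_gt 0 u with hu | hu
  · have hmono : MonotoneOn (D n δ) (Set.Ici 0) := by
      apply monotoneOn_of_deriv_nonneg (convex_Ici 0)
      · exact fun x _ => ((hasDerivAt_D n δ x).differentiableAt.continuousAt).continuousWithinAt
      · exact fun x _ => (hasDerivAt_D n δ x).differentiableAt.differentiableWithinAt
      · intro x hx
        rw [interior_Ici] at hx
        rw [(hasDerivAt_D n δ x).deriv, sub_nonneg, hδ]
        have h1 : (1:ℝ) < Real.exp x := by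
          have := Real.exp_lt_exp.2 hx; rwa [Real.exp_zero] at this
        exact (P_strictAnti n (Set.mem_Ioi.2 one_pos)
          (Set.mem_Ioi.2 (Real.exp_pos x)) h1).le
    have := hmono (Set.self_mem_Ici) (Set.mem_Ici.2 hu) hu
    rwa [D_zero] at this
  · have hanti : AntitoneOn (D n δ) (Set.Iic 0) := by
      apply antitoneOn_of_deriv_nonpos (convex_Iic 0)
      · exact fun x _ => ((hasDerivAt_D n δ x).differentiableAt.continuousAt).continuousWithinAt
      · exact fun x _ => (hasDerivAt_D n δ x).differentiableAt.differentiableWithinAt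
      · intro x hx
        rw [interior_Iic] at hx
        rw [(hasDerivAt_D n δ x).deriv, sub_nonpos, hδ]
        exact (P_strictAnti n (Set.mem_Ioi.2 (Real.exp_pos x))
          (Set.mem_Ioi.2 one_pos) (by have := Real.exp_lt_exp.2 hx; rwa [Real.exp_zero] at this)).le
    have := hanti (Set.mem_Iic.2 hu.le) (Set.self_mem_Iic) hu.le
    rwa [D_zero] at this

lemma f_le_rpow (n : ℕ) {δ : ℝ} (hδ : δ = P n 1) {s : ℝ} (hs : 0 < s) :
    f n s ≤ f n 1 * s ^ δ := by
  have h := D_nonneg n hδ (Real.log s)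
  rw [D, Real.exp_log hs, sub_nonneg] at h
  have h2 := Real.exp_le_exp.2 h
  rw [Real.exp_log (f_pos n hs), Real.exp_add, Real.exp_log (f_pos n one_pos)] at h2
  rwa [Real.rpow_def_of_pos hs, mul_comm (Real.log s) δ]

lemma f_le_pow (n : ℕ) {s : ℝ} (hs : 0 ≤ s) :
    f n s ≤ s ^ (n+1) / (Nat.factorial (n+1)) := by
  set H : ℝ → ℝ := fun u => u ^ (n+1) / (Nat.factorial (n+1)) - f n u with hH
  have hderiv : ∀ u : ℝ, HasDerivAt H
      (((n:ℝ)+1) * u ^ n / (Nat.factorial (n+1)) - u ^ n * Real.exp (-u) / (Nat.factorial n)) u := by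
    intro u
    exact (((hasDerivAt_pow (n+1) u).div_const _).sub (hasDerivAt_f n u)).congr_deriv
      (by push_cast; ring)
  have hmono : MonotoneOn H (Set.Ici 0) := by
    apply monotoneOn_of_deriv_nonneg (convex_Ici 0)
    · exact fun x _ => ((hderiv x).differentiableAt.continuousAt).continuousWithinAt
    · exact fun x _ => (hderiv x).differentiableAt.differentiableWithinAt
    · intro x hx
      rw [interior_Ici] at hx
      rw [(hderiv x).deriv, sub_nonneg]
      have hfac : ((n:ℝ)+1) * x ^ n / (Nat.factorial (n+1)) = x ^ n / (Nat.factorial n) := by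
        rw [Nat.factorial_succ]
        push_cast
        have hm : (Nat.factorial n : ℝ) ≠ 0 := Nat.cast_ne_zero.2 (Nat.factorial_ne_zero n)
        field_simp
      rw [hfac]
      have hexp : Real.exp (-x) ≤ 1 := by
        have := Real.exp_le_exp.2 (neg_nonpos.2 hx.le)
        rwa [Real.exp_zero] at this
      gcongr
      nlinarith [pow_nonneg (Set.mem_Ioi.1 hx).le n]
  have h0 : H 0 = 0 := by simp [hH, f_zero]
  have := hmono Set.self_mem_Ici (Set.mem_Ici.2 hs) hs
  rw [h0] at this
  simpa [hH, sub_nonneg] using this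

theorem stmt12 (n : ℕ) (sn : ℝ → ℝ)
    (hsn : ∀ δ ∈ Set.Ioo (0 : ℝ) ((n : ℝ) + 1), 0 < sn δ ∧
      Real.exp (sn δ) = T n (sn δ) + (sn δ) ^ (n + 1) / (δ * Nat.factorial n))
    (δE : ℝ)
    (hδE : δE = ((Nat.factorial n : ℝ) *
      (Real.exp 1 - ∑ k ∈ Finset.range (n + 1), 1 / (Nat.factorial k : ℝ)))⁻¹) :
    δE ∈ Set.Ioo (0 : ℝ) ((n : ℝ) + 1) ∧
    (∀ δ ∈ Set.Ioo (0 : ℝ) ((n : ℝ) + 1), ME n δE ≤ ME n δ) ∧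
    ME n δE = (1 / Real.exp 1) *
      (Real.exp 1 - ∑ k ∈ Finset.range (n + 1), 1 / (Nat.factorial k : ℝ)) ∧
    sn δE = 1 := by
  have hTone : T n 1 = ∑ k ∈ Finset.range (n+1), 1/(Nat.factorial k : ℝ) := by
    unfold T; simp
  set R : ℝ := Real.exp 1 - ∑ k ∈ Finset.range (n + 1), 1 / (Nat.factorial k : ℝ) with hRdef
  have hR' : R = Real.exp 1 - T n 1 := by rw [hRdef, hTone]
  have hfact : (0:ℝ) < (Nat.factorial n : ℝ) := Nat.cast_pos.2 (Nat.factorial_pos n)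
  have hexp1 : (0:ℝ) < Real.exp 1 := Real.exp_pos 1
  have hc : f n 1 = R / Real.exp 1 := by
    unfold f
    rw [hR', Real.exp_neg]
    field_simp
  have hRpos : 0 < R := by
    have h1 := f_pos n one_pos
    rw [hc] at h1
    exact (div_pos_iff.1 h1).resolve_right (fun h => absurd h.2 (not_lt.2 hexp1.le)) |>.1
  have hRgt : 1 / (Nat.factorial (n+1) : ℝ) < R := by
    have h := f_pos (n+1) one_pos
    unfold f at h
    rw [Real.exp_neg, ← div_eq_mul_inv, sub_pos] at h
    have hTlt : T (n+1) 1 < Real.exp 1 := (div_lt_one hexp1).1 h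
    have hTsucc : T (n+1) 1 = T n 1 + 1 / (Nat.factorial (n+1) : ℝ) := by
      unfold T; rw [Finset.sum_range_succ]; simp
    rw [hTsucc] at hTlt
    rw [hR']
    linarith
  have hδpos : 0 < δE := by
    rw [hδE]; exact inv_pos.2 (mul_pos hfact hRpos)
  have hδinv : δE * ((Nat.factorial n : ℝ) * R) = 1 := by
    rw [hδE]
    field_simp
  have hδlt : δE < (n:ℝ) + 1 := by
    have hfs : ((n:ℝ)+1) * (Nat.factorial n : ℝ) = (Nat.factorial (n+1) : ℝ) := by
      rw [Nat.factorial_succ]; push_cast; ring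
    have h1 : (1:ℝ) < ((n:ℝ)+1) * ((Nat.factorial n : ℝ) * R) := by
      rw [← mul_assoc, hfs]
      have hfp : (0:ℝ) < (Nat.factorial (n+1) : ℝ) := Nat.cast_pos.2 (Nat.factorial_pos (n+1))
      have h2 := (div_lt_iff₀ hfp).1 hRgt
      nlinarith
    have hpos : 0 < (Nat.factorial n : ℝ) * R := mul_pos hfact hRpos
    nlinarith [hδinv]
  have hmemδ : δE ∈ Set.Ioo (0:ℝ) ((n:ℝ)+1) := ⟨hδpos, hδlt⟩
  have hP1 : P n 1 = δE := by
    unfold P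
    rw [hc, hδE, hR', Real.exp_neg, one_pow]
    rw [hR'] at hRpos
    field_simp
  have hkey : ∀ s : ℝ, 0 < s → f n s ≤ f n 1 * s ^ δE :=
    fun s hs => f_le_rpow n hP1.symm hs
  have hEf : ∀ δ s : ℝ, E n δ s = f n s / s ^ δ := fun δ s => rfl
  have hE0 : ∀ δ : ℝ, E n δ 0 = 0 := by
    intro δ; rw [hEf, f_zero, zero_div]
  have hE1 : ∀ δ : ℝ, E n δ 1 = f n 1 := by
    intro δ; rw [hEf, Real.one_rpow, div_one]
  have hbound1 : ∀ δ ∈ Set.Ioo (0:ℝ) ((n:ℝ)+1), ∀ s ∈ Set.Ici (0:ℝ), E n δ s ≤ 1 := by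
    intro δ hδ s hs
    rcases eq_or_lt_of_le (Set.mem_Ici.1 hs) with h | h
    · rw [← h, hE0]; norm_num
    · rw [hEf, div_le_one (Real.rpow_pos_of_pos h δ)]
      rcases le_or_gt s 1 with h1 | h1
      · calc f n s ≤ s ^ (n+1) / (Nat.factorial (n+1)) := f_le_pow n h.le
          _ ≤ s ^ (n+1) := by
              apply div_le_self (pow_nonneg h.le _)
              exact_mod_cast Nat.one_le_iff_ne_zero.2 (Nat.factorial_ne_zero (n+1))
          _ = s ^ ((n:ℝ)+1) := by
              rw [← Real.rpow_natCast s (n+1)]; push_cast; ring_nf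
          _ ≤ s ^ δ := Real.rpow_le_rpow_of_exponent_ge h h1 hδ.2.le
      · calc f n s ≤ 1 := f_le_one n h.le
          _ = (1:ℝ) ^ δ := (Real.one_rpow δ).symm
          _ ≤ s ^ δ := Real.rpow_le_rpow (by norm_num) h1.le (le_of_lt hδ.1)
  have hboundc : ∀ s ∈ Set.Ici (0:ℝ), E n δE s ≤ f n 1 := by
    intro s hs
    rcases eq_or_lt_of_le (Set.mem_Ici.1 hs) with h | h
    · rw [← h, hE0]; exact (f_pos n one_pos).le
    · rw [hEf, div_le_iff₀ (Real.rpow_pos_of_pos h δE)]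
      exact hkey s h
  have hne : (E n δE '' Set.Ici 0).Nonempty :=
    ⟨E n δE 0, Set.mem_image_of_mem _ Set.self_mem_Ici⟩
  have hMEδE : ME n δE = f n 1 := by
    apply le_antisymm
    · apply csSup_le hne
      rintro y ⟨s, hs, rfl⟩
      exact hboundc s hs
    · apply le_csSup
      · exact ⟨f n 1, by rintro y ⟨s, hs, rfl⟩; exact hboundc s hs⟩
      · exact ⟨1, Set.mem_Ici.2 zero_le_one, hE1 δE⟩
  refine ⟨hmemδ, ?_, ?_, ?_⟩
  · intro δ hδ
    rw [hMEδE]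
    apply le_csSup
    · exact ⟨1, by rintro y ⟨s, hs, rfl⟩; exact hbound1 δ hδ s hs⟩
    · exact ⟨1, Set.mem_Ici.2 zero_le_one, hE1 δ⟩
  · rw [hMEδE, hc]; ring
  · obtain ⟨hs0, hseq⟩ := hsn δE hmemδ
    set u := sn δE with hu
    have hfsn : f n u = u ^ (n+1) * Real.exp (-u) / (δE * (Nat.factorial n : ℝ)) := by
      have hT' : T n u = Real.exp u - u ^ (n+1) / (δE * (Nat.factorial n : ℝ)) := by
        linarith [hseq]
      unfold f
      rw [hT', Real.exp_neg]
      have h1 : Real.exp u ≠ 0 := Real.exp_ne_zero u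
      field_simp
      ring
    have hPsn : P n u = δE := by
      unfold P
      rw [hfsn]
      have h1 : Real.exp (-u) ≠ 0 := Real.exp_ne_zero (-u)
      have h2 : u ^ (n+1) ≠ 0 := pow_ne_zero _ hs0.ne'
      field_simp
    exact (P_strictAnti n).injOn (Set.mem_Ioi.2 hs0) (Set.mem_Ioi.2 one_pos)
      (by rw [hPsn, hP1])
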